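/- arXiv:1801.02469 — 4 statements merged into one kernel-verified Lean document; each statement's English description precedes it below -/
import Mathlib

section
/- Let σ²(t) be regularly varying at infinity with index 2α, where α ∈ (0,1), and twice continuously differentiable with ultimately monotone derivatives. Then for c > 0, the function t ↦ (1+ct)/σ(ut) · u, for u large, attains its infimum over t > 0 at a point t_u which converges to t* = α/(c(1−α)) as u → ∞. -/
/-!
Minimizing `m_u` amounts to maximizing the profile `σ2 (u t) / (1 + c t)²`, which by regular
variation behaves like `σ2 u · t^(2α) / (1 + c t)²`; by weighted AM–GM the limit profile has its
unique maximum at `t* = α / (c (1 - α))`. Regular variation only gives pointwise convergence;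
monotonicity of `σ2` at infinity (its derivative is ultimately monotone, and `σ2` cannot
eventually decrease) makes the profile near any `s ≠ t*` uniformly smaller than at `t*`, so `s`
is not a cluster point of `t_u`. Comparing `t_u` with `t_u / 2` and `2 t_u` through
`σ2 (2v) / σ2 v → 2^(2α) ∈ (1, 4)` keeps `t_u` in a compact subinterval of `(0, ∞)`.
-/

open Set Filter

def UltimatelyMonotone (g : ℝ → ℝ) : Prop :=
  ∃ A : ℝ, MonotoneOn g (Set.Ici A) ∨ AntitoneOn g (Set.Ici A)

open Topology

theorem mul_div_sqrt_le_mul_div_sqrt_iff {u p q a b : ℝ} (hu : 0 < u) (hp : 0 < p) (hq : 0 < q)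
    (ha : 0 < a) (hb : 0 < b) : u * p / √a ≤ u * q / √b ↔ b / q ^ 2 ≤ a / p ^ 2 := by
  rw [mul_div_assoc, mul_div_assoc, mul_le_mul_iff_right₀ hu,
    div_le_div_iff₀ (Real.sqrt_pos.2 ha) (Real.sqrt_pos.2 hb),
    div_le_div_iff₀ (by positivity) (by positivity),
    ← pow_le_pow_iff_left₀ (by positivity) (by positivity) two_ne_zero, mul_pow, mul_pow,
    Real.sq_sqrt ha.le, Real.sq_sqrt hb.le, mul_comm b, mul_comm a]

theorem UltimatelyMonotone.eventually_nonneg_or_nonpos {g : ℝ → ℝ} (hg : UltimatelyMonotone g) :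
    (∀ᶠ x in atTop, 0 ≤ g x) ∨ ∀ᶠ x in atTop, g x ≤ 0 := by
  obtain ⟨A, hmono | hanti⟩ := hg
  · by_cases h : ∃ x ≥ A, 0 ≤ g x
    · obtain ⟨x, hxA, hx⟩ := h
      exact .inl (eventually_atTop.2 ⟨x, fun y hy => hx.trans (hmono hxA (hxA.trans hy) hy)⟩)
    · push Not at h
      exact .inr (eventually_atTop.2 ⟨A, fun y hy => (h y hy).le⟩)
  · by_cases h : ∃ x ≥ A, g x ≤ 0
    · obtain ⟨x, hxA, hx⟩ := h
      exact .inr (eventually_atTop.2 ⟨x, fun y hy => (hanti hxA (hxA.trans hy) hy).trans hx⟩)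
    · push Not at h
      exact .inl (eventually_atTop.2 ⟨A, fun y hy => (h y hy).le⟩)

theorem UltimatelyMonotone.of_deriv {f : ℝ → ℝ} (hf : ∀ᶠ x in atTop, DifferentiableAt ℝ f x)
    (hf' : UltimatelyMonotone (deriv f)) : UltimatelyMonotone f := by
  rcases hf'.eventually_nonneg_or_nonpos with h | h
  · obtain ⟨B, hB⟩ := eventually_atTop.1 (hf.and h)
    exact ⟨B, .inl <| monotoneOn_of_deriv_nonneg (convex_Ici B)
      (fun x hx => (hB x hx).1.continuousAt.continuousWithinAt)
      (fun x hx => (hB x (interior_subset hx)).1.differentiableWithinAt)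
      fun x hx => (hB x (interior_subset hx)).2⟩
  · obtain ⟨B, hB⟩ := eventually_atTop.1 (hf.and h)
    exact ⟨B, .inr <| antitoneOn_of_deriv_nonpos (convex_Ici B)
      (fun x hx => (hB x hx).1.continuousAt.continuousWithinAt)
      (fun x hx => (hB x (interior_subset hx)).1.differentiableWithinAt)
      fun x hx => (hB x (interior_subset hx)).2⟩

theorem UltimatelyMonotone.exists_monotoneOn {f : ℝ → ℝ} {k ρ : ℝ} (hf : UltimatelyMonotone f)
    (hpos : ∀ᶠ x in atTop, 0 < f x) (hk : 1 ≤ k) (hρ : 1 < ρ)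
    (h : Tendsto (fun u => f (u * k) / f u) atTop (𝓝 ρ)) : ∃ A, MonotoneOn f (Ici A) := by
  obtain ⟨A, hmono | hanti⟩ := hf
  · exact ⟨A, hmono⟩
  · have hle : ∀ᶠ u in atTop, f (u * k) / f u ≤ 1 := by
      filter_upwards [hpos, eventually_ge_atTop A, eventually_ge_atTop 0] with u hu huA hu0
      have huk : u ≤ u * k := le_mul_of_one_le_right hu0 hk
      exact (div_le_one hu).2 (hanti huA (huA.trans huk) huk)
    obtain ⟨u, h₁, h₂⟩ := ((h.eventually (eventually_gt_nhds hρ)).and hle).exists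
    exact absurd (h₁.trans_le h₂) (lt_irrefl 1)

theorem MonotoneOn.tendsto_atTop_of_tendsto_div {f : ℝ → ℝ} {A k ρ : ℝ}
    (hmono : MonotoneOn f (Ici A)) (hpos : ∀ᶠ x in atTop, 0 < f x) (hk : 0 < k) (hρ : ρ ≠ 1)
    (h : Tendsto (fun u => f (u * k) / f u) atTop (𝓝 ρ)) : Tendsto f atTop atTop := by
  set g : ℝ → ℝ := fun x => f (max x A)
  have hg : Monotone g := fun x y hxy =>
    hmono (le_max_right x A) (le_max_right y A) (max_le_max_right A hxy)
  have hgf : g =ᶠ[atTop] f := by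
    filter_upwards [eventually_ge_atTop A] with x hx
    simp only [g, max_eq_left hx]
  refine (tendsto_atTop_atTop_of_monotone' hg fun hbdd => hρ ?_).congr' hgf
  -- a bounded monotone `f` has a positive limit `L`, which forces `ρ = L / L = 1`
  obtain ⟨x, hx, hxA⟩ := (hpos.and (eventually_ge_atTop A)).exists
  have hL : 0 < ⨆ y, g y := hx.trans_le (by simpa [g, max_eq_left hxA] using le_ciSup hbdd x)
  have hlim := (tendsto_atTop_ciSup hg hbdd).congr' hgf
  have hρ1 := (hlim.comp (tendsto_id.atTop_mul_const hk)).div hlim hL.ne'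
  rw [div_self hL.ne'] at hρ1
  exact tendsto_nhds_unique h hρ1

theorem rpow_div_sq_lt_rpow_div_sq {α c t : ℝ} (hα : 0 < α) (hα1 : α < 1) (hc : 0 < c)
    (ht : 0 < t) (hne : t ≠ α / (c * (1 - α))) :
    t ^ (2 * α) / (1 + c * t) ^ 2 <
      (α / (c * (1 - α))) ^ (2 * α) / (1 + c * (α / (c * (1 - α)))) ^ 2 := by
  set tstar := α / (c * (1 - α)) with htstar
  have hα1' : 0 < 1 - α := sub_pos.2 hα1
  have hstar : 0 < tstar := by positivity
  -- weighted AM-GM, in Bernoulli's form, at `t / t*`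
  have hbern : (t / tstar) ^ α < 1 + α * (t / tstar - 1) := by
    have := rpow_one_add_lt_one_add_mul_self (s := t / tstar - 1)
      (by linarith [div_pos ht hstar])
      (sub_ne_zero.2 fun h => hne ((div_eq_one_iff_eq hstar.ne').1 h)) hα hα1
    rwa [add_sub_cancel] at this
  have hratio : 1 + α * (t / tstar - 1) = (1 + c * t) / (1 + c * tstar) := by
    rw [htstar]
    field_simp
    ring
  have hroot : t ^ α / (1 + c * t) < tstar ^ α / (1 + c * tstar) := by
    rw [hratio, Real.div_rpow ht.le hstar.le, div_lt_div_iff₀ (by positivity) (by positivity)]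
      at hbern
    rw [div_lt_div_iff₀ (by positivity) (by positivity)]
    linarith
  have hsq : ∀ x : ℝ, 0 ≤ x → x ^ (2 * α) / (1 + c * x) ^ 2 = (x ^ α / (1 + c * x)) ^ 2 :=
    fun x hx => by rw [div_pow, mul_comm, Real.rpow_mul hx, Real.rpow_two]
  rw [hsq t ht.le, hsq tstar hstar.le]
  exact pow_lt_pow_left₀ hroot (by positivity) two_ne_zero

theorem tendsto_one_add_two_mul_div_atTop {c : ℝ} (hc : 0 < c) :
    Tendsto (fun s => (1 + c * (2 * s)) / (1 + c * s)) atTop (𝓝 2) := by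
  have h : Tendsto (fun s => 2 - (1 + c * s)⁻¹) atTop (𝓝 (2 - 0)) :=
    tendsto_const_nhds.sub <| tendsto_inv_atTop_zero.comp <|
      tendsto_atTop_add_const_left _ 1 (tendsto_id.const_mul_atTop hc)
  rw [sub_zero] at h
  refine h.congr' ?_
  filter_upwards [eventually_gt_atTop 0] with s hs
  field_simp
  ring

theorem tendsto_one_add_two_mul_div_nhds_zero (c : ℝ) :
    Tendsto (fun s => (1 + c * (2 * s)) / (1 + c * s)) (𝓝 0) (𝓝 1) := by
  have h : ContinuousAt (fun s : ℝ => (1 + c * (2 * s)) / (1 + c * s)) 0 :=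
    ContinuousAt.div (by fun_prop) (by fun_prop) (by simp)
  simpa using h.tendsto

theorem one_add_two_mul_div_le {c a b : ℝ} (hc : 0 ≤ c) (ha : 0 ≤ a) (hab : a ≤ b) :
    (1 + c * (2 * a)) / (1 + c * a) ≤ (1 + c * (2 * b)) / (1 + c * b) := by
  have hb : 0 ≤ b := ha.trans hab
  rw [div_le_div_iff₀ (by positivity) (by positivity)]
  nlinarith [mul_le_mul_of_nonneg_left hab hc]

theorem le_mul_of_forall_div_sq_le {σ2 : ℝ → ℝ} {c u M x : ℝ} (hc : 0 ≤ c) (hu : 0 < u)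
    (hσ : 0 < σ2 x) (hM : ∀ t, 0 < t → σ2 (u * t) / (1 + c * t) ^ 2 ≤ M) (hx : x ∈ Ioc 0 u) :
    σ2 x ≤ (1 + c) ^ 2 * M := by
  have hxu : c * (x / u) ≤ c := mul_le_of_le_one_right hc ((div_le_one hu).2 hx.2)
  have hq : 0 < 1 + c * (x / u) := by linarith [mul_nonneg hc (div_pos hx.1 hu).le]
  have hbound := hM (x / u) (div_pos hx.1 hu)
  rw [mul_div_cancel₀ _ hu.ne'] at hbound
  have hM0 : 0 ≤ M := (div_pos hσ (by positivity)).le.trans hbound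
  rw [div_le_iff₀ (by positivity)] at hbound
  calc σ2 x ≤ M * (1 + c * (x / u)) ^ 2 := hbound
    _ ≤ M * (1 + c) ^ 2 := by gcongr
    _ = (1 + c) ^ 2 * M := mul_comm _ _

/-- `tu u` maximizes `t ↦ σ2 (u t) / (1 + c t)² = (u / m_u(t))²` over `t > 0`, for all large `u`. -/
def IsEventualMaximizer (σ2 : ℝ → ℝ) (c : ℝ) (tu : ℝ → ℝ) : Prop :=
  ∀ᶠ u in atTop, 0 < tu u ∧
    ∀ t, 0 < t → σ2 (u * t) / (1 + c * t) ^ 2 ≤ σ2 (u * tu u) / (1 + c * tu u) ^ 2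

namespace IsEventualMaximizer

variable {σ2 : ℝ → ℝ} {c : ℝ} {tu : ℝ → ℝ}

theorem of_isMin (hc : 0 ≤ c) (hpos : ∀ t : ℝ, 0 < t → 0 < σ2 t)
    (htu : ∀ᶠ u in atTop, 0 < tu u ∧ ∀ t : ℝ, 0 < t →
      u * (1 + c * tu u) / √(σ2 (u * tu u)) ≤ u * (1 + c * t) / √(σ2 (u * t))) :
    IsEventualMaximizer σ2 c tu := by
  filter_upwards [htu, eventually_gt_atTop 0] with u ⟨htu0, hmin⟩ hu
  exact ⟨htu0, fun t ht => (mul_div_sqrt_le_mul_div_sqrt_iff hu (by positivity) (by positivity)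
    (hpos _ (by positivity)) (hpos _ (by positivity))).1 (hmin t ht)⟩

/-- A large `t_u` would lose to `t_u / 2`: the factor `((1 + c t) / (1 + c t / 2))²` tends to
`4`, beyond the doubling ratio `ρ`. -/
theorem exists_eventually_lt (hmax : IsEventualMaximizer σ2 c tu) (hc : 0 < c)
    (hpos : ∀ t : ℝ, 0 < t → 0 < σ2 t) {ρ : ℝ} (hρ : ρ < 4)
    (h : Tendsto (fun v => σ2 (v * 2) / σ2 v) atTop (𝓝 ρ)) :
    ∃ T, ∀ᶠ u in atTop, tu u < T := by
  have hgain := (tendsto_one_add_two_mul_div_atTop hc).pow 2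
  rw [show (2 : ℝ) ^ 2 = 4 by norm_num] at hgain
  obtain ⟨s₀, hs₀, hρs₀⟩ :=
    ((eventually_gt_atTop 0).and (hgain.eventually (eventually_gt_nhds hρ))).exists
  obtain ⟨V, hV⟩ := eventually_atTop.1 (h.eventually (eventually_lt_nhds hρs₀))
  refine ⟨2 * s₀, ?_⟩
  filter_upwards [hmax, eventually_gt_atTop 0, eventually_ge_atTop (V / s₀)]
    with u ⟨_, hmaxu⟩ hu huV
  by_contra! hT
  obtain ⟨s, hts⟩ : ∃ s, tu u = 2 * s := ⟨tu u / 2, by ring⟩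
  rw [hts] at hmaxu hT
  have hs : s₀ ≤ s := by linarith
  have hs0 : 0 < s := hs₀.trans_le hs
  have hσ : 0 < σ2 (u * s) := hpos _ (by positivity)
  have hgain : ((1 + c * (2 * s)) / (1 + c * s)) ^ 2 ≤ σ2 (u * s * 2) / σ2 (u * s) := by
    have hcmp := hmaxu s (by positivity)
    rw [div_le_div_iff₀ (by positivity) (by positivity)] at hcmp
    rw [div_pow, div_le_div_iff₀ (by positivity) hσ, show u * s * 2 = u * (2 * s) by ring]
    linarith
  have hR := hV (u * s) (by rw [div_le_iff₀ hs₀] at huV; nlinarith)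
  exact hR.not_ge <|
    (pow_le_pow_left₀ (by positivity) (one_add_two_mul_div_le hc.le hs₀.le hs) 2).trans hgain

/-- A small `t_u` would lose to `2 t_u`: the factor `((1 + 2 c t) / (1 + c t))²` tends to `1`,
below the doubling ratio `ρ`. -/
theorem exists_eventually_gt (hmax : IsEventualMaximizer σ2 c tu) (hc : 0 ≤ c)
    (hpos : ∀ t : ℝ, 0 < t → 0 < σ2 t) (hutu : Tendsto (fun u => u * tu u) atTop atTop)
    {ρ : ℝ} (hρ : 1 < ρ) (h : Tendsto (fun v => σ2 (v * 2) / σ2 v) atTop (𝓝 ρ)) :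
    ∃ t₀ > 0, ∀ᶠ u in atTop, t₀ < tu u := by
  have hgain := ((tendsto_one_add_two_mul_div_nhds_zero c).pow 2).mono_left
    (nhdsWithin_le_nhds (s := Ioi 0))
  rw [one_pow] at hgain
  obtain ⟨t₀, ht₀, hρt₀⟩ :=
    (eventually_mem_nhdsWithin.and (hgain.eventually (eventually_lt_nhds hρ))).exists
  obtain ⟨V, hV⟩ := eventually_atTop.1 (h.eventually (eventually_gt_nhds hρt₀))
  refine ⟨t₀, ht₀, ?_⟩
  filter_upwards [hmax, eventually_gt_atTop 0, hutu.eventually_ge_atTop V]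
    with u ⟨htu0, hmaxu⟩ hu huV
  by_contra! ht
  have hσ : 0 < σ2 (u * tu u) := hpos _ (by positivity)
  have hloss : σ2 (u * tu u * 2) / σ2 (u * tu u) ≤ ((1 + c * (2 * tu u)) / (1 + c * tu u)) ^ 2 := by
    have hcmp := hmaxu (2 * tu u) (by positivity)
    rw [div_le_div_iff₀ (by positivity) (by positivity)] at hcmp
    rw [div_pow, div_le_div_iff₀ hσ (by positivity), show u * tu u * 2 = u * (2 * tu u) by ring]
    linarith
  exact (hV _ huV).not_ge <| hloss.trans
    (pow_le_pow_left₀ (by positivity) (one_add_two_mul_div_le hc htu0.le ht) 2)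

theorem tendsto_mul_atTop (hmax : IsEventualMaximizer σ2 c tu) (hc : 0 ≤ c)
    (hpos : ∀ t : ℝ, 0 < t → 0 < σ2 t) (hinf : Tendsto σ2 atTop atTop) :
    Tendsto (fun u => u * tu u) atTop atTop := by
  have hσ : Tendsto (fun u => σ2 (u * tu u)) atTop atTop := by
    refine tendsto_atTop_mono' _ ?_ (hinf.atTop_div_const (by positivity : (0 : ℝ) < (1 + c) ^ 2))
    filter_upwards [hmax, eventually_gt_atTop 0] with u ⟨htu0, hmaxu⟩ hu
    calc σ2 u / (1 + c) ^ 2 = σ2 (u * 1) / (1 + c * 1) ^ 2 := by simp only [mul_one]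
      _ ≤ σ2 (u * tu u) / (1 + c * tu u) ^ 2 := hmaxu 1 one_pos
      _ ≤ σ2 (u * tu u) := div_le_self (hpos _ (by positivity)).le
          (one_le_pow₀ (le_add_of_nonneg_right (by positivity)))
  -- `σ2 (u t_u) → ∞`, whereas `σ2` is bounded on `(0, u₁]` for any fixed large `u₁`
  refine tendsto_atTop.2 fun B => ?_
  obtain ⟨u₁, ⟨-, hmax₁⟩, hu₁⟩ := (hmax.and (eventually_ge_atTop (max B 1))).exists
  have hu₁0 : 0 < u₁ := lt_of_lt_of_le one_pos (le_of_max_le_right hu₁)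
  filter_upwards [hσ.eventually_gt_atTop ((1 + c) ^ 2 * (σ2 (u₁ * tu u₁) / (1 + c * tu u₁) ^ 2)),
    hmax, eventually_gt_atTop 0] with u hu ⟨htu, _⟩ hu0
  by_contra! hlt
  have hx : 0 < u * tu u := by positivity
  exact (le_mul_of_forall_div_sq_le hc hu₁0 (hpos _ hx) hmax₁
    ⟨hx, hlt.le.trans (le_of_max_le_left hu₁)⟩).not_gt hu

/-- On a short interval `[s₁, s₂]` far out, monotonicity bounds the profile by
`σ2 (u s₂) / (1 + c s₁)²`, which regular variation compares with the profile at `t`. -/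
theorem eventually_notMem_Icc (hmax : IsEventualMaximizer σ2 c tu) (hc : 0 ≤ c)
    (hpos : ∀ t : ℝ, 0 < t → 0 < σ2 t) {α : ℝ}
    (hRV : ∀ t : ℝ, 0 < t → Tendsto (fun u => σ2 (u * t) / σ2 u) atTop (𝓝 (t ^ (2 * α))))
    {A : ℝ} (hmono : MonotoneOn σ2 (Ici A)) {s₁ s₂ t : ℝ} (hs₁ : 0 < s₁) (hs : s₁ ≤ s₂)
    (ht : 0 < t) (hlt : s₂ ^ (2 * α) / (1 + c * s₁) ^ 2 < t ^ (2 * α) / (1 + c * t) ^ 2) :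
    ∀ᶠ u in atTop, tu u ∉ Icc s₁ s₂ := by
  have hs₂ : 0 < s₂ := hs₁.trans_le hs
  have hcmp : ∀ᶠ u in atTop, σ2 (u * s₂) / (1 + c * s₁) ^ 2 < σ2 (u * t) / (1 + c * t) ^ 2 := by
    filter_upwards [((hRV s₂ hs₂).div_const _).eventually_lt ((hRV t ht).div_const _) hlt,
      eventually_gt_atTop 0] with u hu hu0
    rwa [div_right_comm, div_right_comm (σ2 (u * t)), div_lt_div_iff_of_pos_right (hpos u hu0)]
      at hu
  filter_upwards [hmax, hcmp, eventually_ge_atTop (A / s₁), eventually_gt_atTop 0]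
    with u ⟨_, hmaxu⟩ hu huA hu0 ⟨h₁, h₂⟩
  have hA : A ≤ u * s₁ := (div_le_iff₀ hs₁).1 huA
  have hprofile : σ2 (u * tu u) / (1 + c * tu u) ^ 2 ≤ σ2 (u * s₂) / (1 + c * s₁) ^ 2 :=
    div_le_div₀ (hpos _ (by positivity)).le
      (hmono (hA.trans (by gcongr)) (hA.trans (by gcongr)) (by gcongr)) (by positivity)
      (by gcongr)
  exact ((hmaxu t ht).trans hprofile).not_gt hu

theorem not_mapClusterPt {α : ℝ} (hmax : IsEventualMaximizer σ2 c tu) (hα : 0 < α)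
    (hα1 : α < 1) (hc : 0 < c) (hpos : ∀ t : ℝ, 0 < t → 0 < σ2 t)
    (hRV : ∀ t : ℝ, 0 < t → Tendsto (fun u => σ2 (u * t) / σ2 u) atTop (𝓝 (t ^ (2 * α))))
    {A : ℝ} (hmono : MonotoneOn σ2 (Ici A)) {s : ℝ} (hs : 0 < s)
    (hne : s ≠ α / (c * (1 - α))) : ¬MapClusterPt s atTop tu := by
  have hα1' : 0 < 1 - α := sub_pos.2 hα1
  have hcont : ContinuousAt (fun η => (s + η) ^ (2 * α) / (1 + c * (s - η)) ^ 2) 0 :=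
    ContinuousAt.div (Real.continuousAt_rpow_const _ _ (.inr (by positivity)) |>.comp (by fun_prop))
      (by fun_prop) (by simp; positivity)
  have hnear := hcont.eventually (eventually_lt_nhds
    (by simpa using rpow_div_sq_lt_rpow_div_sq hα hα1 hc hs hne))
  obtain ⟨η, hlt, hη, hηs⟩ :=
    ((hnear.filter_mono nhdsWithin_le_nhds).and (Ioo_mem_nhdsGT hs)).exists
  intro hclus
  exact hclus.frequently (Icc_mem_nhds (by linarith) (by linarith))
    (hmax.eventually_notMem_Icc hc.le hpos hRV hmono (by linarith) (by linarith) (by positivity)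
      hlt)

end IsEventualMaximizer

theorem minimizer_convergence_general
    (σ2 : ℝ → ℝ) (α c : ℝ) (hα : 0 < α) (hα1 : α < 1) (hc : 0 < c)
    (hpos : ∀ t : ℝ, 0 < t → 0 < σ2 t)
    (hRV : ∀ t : ℝ, 0 < t →
      Tendsto (fun u => σ2 (u * t) / σ2 u) atTop (nhds (t ^ (2 * α))))
    (hC2 : ContDiffOn ℝ 2 σ2 (Set.Ioi 0))
    (hmon1 : UltimatelyMonotone (deriv σ2))
    (tu : ℝ → ℝ)
    (htu : ∀ᶠ u in atTop, 0 < tu u ∧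
      ∀ t : ℝ, 0 < t →
        u * (1 + c * tu u) / Real.sqrt (σ2 (u * tu u))
          ≤ u * (1 + c * t) / Real.sqrt (σ2 (u * t))) :
    Tendsto tu atTop (nhds (α / (c * (1 - α)))) := by
  have hmax := IsEventualMaximizer.of_isMin hc.le hpos htu
  have hposev : ∀ᶠ x in atTop, 0 < σ2 x := (eventually_gt_atTop 0).mono hpos
  have hRV2 := hRV 2 two_pos
  have hρ1 : (1 : ℝ) < 2 ^ (2 * α) := Real.one_lt_rpow one_lt_two (by positivity)
  have hρ4 : (2 : ℝ) ^ (2 * α) < 4 :=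
    calc (2 : ℝ) ^ (2 * α) < 2 ^ (2 : ℝ) :=
          Real.rpow_lt_rpow_of_exponent_lt one_lt_two (by linarith)
      _ = 4 := by norm_num [Real.rpow_two]
  have hdiff : ∀ᶠ x in atTop, DifferentiableAt ℝ σ2 x := by
    filter_upwards [eventually_gt_atTop 0] with x hx
    exact (hC2.differentiableOn (by norm_num)).differentiableAt (Ioi_mem_nhds hx)
  obtain ⟨A, hmono⟩ :=
    (UltimatelyMonotone.of_deriv hdiff hmon1).exists_monotoneOn hposev one_le_two hρ1 hRV2
  have hinf := hmono.tendsto_atTop_of_tendsto_div hposev two_pos hρ1.ne' hRV2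
  obtain ⟨T, hT⟩ := hmax.exists_eventually_lt hc hpos hρ4 hRV2
  obtain ⟨t₀, ht₀, ht₀u⟩ :=
    hmax.exists_eventually_gt hc.le hpos (hmax.tendsto_mul_atTop hc.le hpos hinf) hρ1 hRV2
  refine isCompact_Icc.tendsto_nhds_of_unique_mapClusterPt
    (by filter_upwards [ht₀u, hT] with u h₁ h₂ using ⟨h₁.le, h₂.le⟩) fun s hs hclus => ?_
  by_contra hne
  exact hmax.not_mapClusterPt hα hα1 hc hpos hRV hmono (ht₀.trans_le hs.1) hne hclus

/-- If `σ²` is regularly varying at `∞` with index `2α`, `α ∈ (0,1)`, twice continuously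
differentiable on `(0,∞)` with ultimately monotone derivatives, then for `c > 0` the
minimizer `t_u` of `t ↦ u(1+ct)/σ(ut)` over `t > 0` converges to
`t* = α/(c(1−α))` as `u → ∞`. -/
theorem minimizer_convergence
    (σ2 : ℝ → ℝ) (α c : ℝ) (hα : 0 < α) (hα1 : α < 1) (hc : 0 < c)
    (hpos : ∀ t : ℝ, 0 < t → 0 < σ2 t)
    (hRV : ∀ t : ℝ, 0 < t →
      Tendsto (fun u => σ2 (u * t) / σ2 u) atTop (nhds (t ^ (2 * α))))
    (hC2 : ContDiffOn ℝ 2 σ2 (Set.Ioi 0))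
    (hmon1 : UltimatelyMonotone (deriv σ2))
    (hmon2 : UltimatelyMonotone (deriv (deriv σ2)))
    (tu : ℝ → ℝ)
    (htu : ∀ᶠ u in atTop, 0 < tu u ∧
      ∀ t : ℝ, 0 < t →
        u * (1 + c * tu u) / Real.sqrt (σ2 (u * tu u))
          ≤ u * (1 + c * t) / Real.sqrt (σ2 (u * t))) :
    Tendsto tu atTop (nhds (α / (c * (1 - α)))) :=
  minimizer_convergence_general σ2 α c hα hα1 hc hpos hRV hC2 hmon1 tu htu
end

section
/- Let σ² be continuous on [0,T] with σ²(0)=0, continuously differentiable on (0,T] with positive derivative, and regularly varying at 0 with index 2α₀ ∈ (0,2]. Then for u sufficiently large, the function σ̃_u(t) = σ(t)(u+cT)/((u+ct)σ(T)) on [0,T] attains its maximum at t = T, and for any δ_u → 0, sup over t ∈ [T−δ_u, T] of | (1−σ̃_u(t))/|t−T| − σ'(T)/σ(T) | → 0 as u → ∞. -/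
open Set Filter

set_option maxHeartbeats 2000000 in
theorem aux_main
    (σ2 : ℝ → ℝ) (c T : ℝ) (hc : 0 < c) (hT : 0 < T)
    (h0 : σ2 0 = 0)
    (hcont : ContinuousOn σ2 (Set.Icc 0 T))
    (hdiff : ∀ t ∈ Set.Ioc (0:ℝ) T, HasDerivAt σ2 (deriv σ2 t) t ∧ 0 < deriv σ2 t)
    (hderivCont : ContinuousOn (deriv σ2) (Set.Ioc 0 T)) :
    (∀ᶠ u in atTop, IsMaxOn
        (fun t => Real.sqrt (σ2 t) / (u + c * t) * ((u + c * T) / Real.sqrt (σ2 T)))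
        (Set.Icc 0 T) T) ∧
      ∀ δ : ℝ → ℝ, (∀ u, 0 < δ u) → Tendsto δ atTop (nhds 0) →
        Tendsto (fun u =>
            sSup ((fun t => |(1 - Real.sqrt (σ2 t) / (u + c * t) * ((u + c * T) / Real.sqrt (σ2 T))) / (T - t) -
              deriv (fun s => Real.sqrt (σ2 s)) T / Real.sqrt (σ2 T)|) ''
              Set.Ico (T - δ u) T))
          atTop (nhds 0) := by
  set σ : ℝ → ℝ := fun t => Real.sqrt (σ2 t) with hσdef
  have hmono : StrictMonoOn σ2 (Icc 0 T) := by
    apply strictMonoOn_of_deriv_pos (convex_Icc 0 T) hcont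
    intro x hx
    rw [interior_Icc] at hx
    exact (hdiff x ⟨hx.1, hx.2.le⟩).2
  have hσ2pos : ∀ t ∈ Ioc (0:ℝ) T, 0 < σ2 t := by
    intro t ht
    have h1 := hmono (left_mem_Icc.2 hT.le) ⟨ht.1.le, ht.2⟩ ht.1
    linarith [h1, h0.symm.le, h0.le]
  have hσpos : ∀ t ∈ Ioc (0:ℝ) T, 0 < σ t := fun t ht => Real.sqrt_pos.2 (hσ2pos t ht)
  have hST : 0 < σ T := hσpos T ⟨hT, le_rfl⟩
  have hσnonneg : ∀ t, 0 ≤ σ t := fun t => Real.sqrt_nonneg _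
  have hσle : ∀ t ∈ Icc (0:ℝ) T, σ t ≤ σ T := fun t ht =>
    Real.sqrt_le_sqrt (hmono.monotoneOn ht (right_mem_Icc.2 hT.le) ht.2)
  set s' : ℝ → ℝ := fun t => deriv σ2 t / (2 * σ t) with hs'def
  have hσderiv : ∀ t ∈ Ioc (0:ℝ) T, HasDerivAt σ (s' t) t := fun t ht =>
    (hdiff t ht).1.sqrt (ne_of_gt (hσ2pos t ht))
  have hs'pos : ∀ t ∈ Ioc (0:ℝ) T, 0 < s' t := fun t ht =>
    div_pos (hdiff t ht).2 (by have := hσpos t ht; linarith)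
  have hs'cont : ContinuousOn s' (Ioc 0 T) := by
    apply hderivCont.div
    · exact continuousOn_const.mul ((hcont.mono Ioc_subset_Icc_self).sqrt)
    · intro t ht
      have := hσpos t ht
      exact ne_of_gt (by linarith)
  have hσcont : ContinuousOn σ (Icc 0 T) := hcont.sqrt
  have hden : ∀ (u : ℝ), 1 ≤ u → ∀ t ∈ Icc (0:ℝ) T, 0 < u + c * t := by
    intro u hu t ht
    nlinarith [ht.1, hc.le]
  have hDer : ∀ (u : ℝ), 1 ≤ u → ∀ t ∈ Ioc (0:ℝ) T,
      HasDerivAt (fun s => σ s / (u + c * s) * ((u + c * T) / σ T))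
        ((s' t * (u + c * t) - σ t * c) / (u + c * t) ^ 2 * ((u + c * T) / σ T)) t := by
    intro u hu t ht
    have h1 : HasDerivAt (fun s : ℝ => u + c * s) c t := by
      simpa using ((hasDerivAt_id t).const_mul c).const_add u
    exact ((hσderiv t ht).div h1 (ne_of_gt (hden u hu t ⟨ht.1.le, ht.2⟩))).mul_const _
  have hContOn : ∀ (u : ℝ), 1 ≤ u →
      ContinuousOn (fun s => σ s / (u + c * s) * ((u + c * T) / σ T)) (Icc 0 T) := by
    intro u hu
    exact (hσcont.div (continuousOn_const.add (continuousOn_const.mul continuousOn_id))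
      (fun t ht => ne_of_gt (hden u hu t ht))).mul continuousOn_const
  have hAtT : ∀ (u : ℝ), 1 ≤ u → σ T / (u + c * T) * ((u + c * T) / σ T) = 1 := by
    intro u hu
    have h1 := hden u hu T (right_mem_Icc.2 hT.le)
    field_simp
  constructor
  · -- Part 1: maximum at T for large u
    obtain ⟨x₀, hx₀, hmin⟩ := (isCompact_Icc (a := T/2) (b := T)).exists_isMinOn
      (nonempty_Icc.2 (by linarith)) (hs'cont.mono (fun s hs => ⟨by linarith [hs.1], hs.2⟩))
    have hmpos : 0 < s' x₀ := hs'pos x₀ ⟨by linarith [hx₀.1], hx₀.2⟩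
    have hhalf : σ (T/2) < σ T := by
      apply Real.sqrt_lt_sqrt (le_of_lt (hσ2pos (T/2) ⟨by linarith, by linarith⟩))
      exact hmono ⟨by linarith, by linarith⟩ (right_mem_Icc.2 hT.le) (by linarith)
    filter_upwards [eventually_ge_atTop
      (max 1 (max (c * σ T / s' x₀) (c * T * σ T / (σ T - σ (T/2)))))] with u hu
    have hu1 : 1 ≤ u := le_trans (le_max_left _ _) hu
    have hu2 : c * σ T ≤ s' x₀ * u := by
      have h1 : c * σ T / s' x₀ ≤ u := le_trans (le_trans (le_max_left _ _) (le_max_right _ _)) hu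
      rw [div_le_iff₀ hmpos] at h1
      linarith [h1]
    have hu3 : c * T * σ T ≤ u * (σ T - σ (T/2)) := by
      have h1 : c * T * σ T / (σ T - σ (T/2)) ≤ u :=
        le_trans (le_trans (le_max_right _ _) (le_max_right _ _)) hu
      rw [div_le_iff₀ (by linarith)] at h1
      linarith [h1]
    intro t ht
    simp only [mem_setOf_eq]
    have hkey : σ t * (u + c * T) ≤ σ T * (u + c * t) := by
      rcases le_or_gt t (T/2) with h12 | h12
      · have h1 : σ t ≤ σ (T/2) :=
          Real.sqrt_le_sqrt (hmono.monotoneOn ht ⟨by linarith, by linarith⟩ h12)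
        nlinarith [mul_nonneg (mul_nonneg hc.le hT.le) (sub_nonneg.2 h1),
          mul_nonneg (show (0:ℝ) ≤ u by linarith) (sub_nonneg.2 h1),
          mul_nonneg (mul_nonneg hc.le ht.1) hST.le,
          mul_nonneg (mul_nonneg hc.le hT.le) (sub_nonneg.2 hhalf.le)]
      · rcases eq_or_lt_of_le ht.2 with rfl | hlt
        · nlinarith []
        · obtain ⟨ξ, hξ, hslope⟩ := exists_hasDerivAt_eq_slope
            (fun s => σ T * (u + c * s) - σ s * (u + c * T))
            (fun s => σ T * c - s' s * (u + c * T)) hlt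
            (by
              apply ContinuousOn.sub
              · exact continuousOn_const.mul (continuousOn_const.add (continuousOn_const.mul continuousOn_id))
              · exact ContinuousOn.mul (hσcont.mono (Icc_subset_Icc ht.1 le_rfl)) continuousOn_const)
            (by
              intro x hx
              have hx1 : x ∈ Ioc (0:ℝ) T := ⟨by linarith [hx.1], by linarith [hx.2]⟩
              have hd1 : HasDerivAt (fun s : ℝ => σ T * (u + c * s)) (σ T * c) x := by
                simpa using (((hasDerivAt_id x).const_mul c).const_add u).const_mul (σ T)
              exact hd1.sub ((hσderiv x hx1).mul_const _))
          have hξm : s' x₀ ≤ s' ξ := hmin ⟨by linarith [hξ.1], by linarith [hξ.2]⟩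
          have hd : σ T * c - s' ξ * (u + c * T) ≤ 0 := by
            nlinarith [hu2, mul_nonneg (sub_nonneg.2 hξm) (show (0:ℝ) ≤ u by linarith),
              mul_nonneg (le_trans hmpos.le hξm) (mul_nonneg hc.le hT.le)]
          have hTt : (0:ℝ) < T - t := by linarith
          rw [eq_div_iff (ne_of_gt hTt)] at hslope
          have h3 : (σ T * c - s' ξ * (u + c * T)) * (T - t) ≤ 0 :=
            mul_nonpos_of_nonpos_of_nonneg hd hTt.le
          nlinarith [hslope, h3]
    have h1 : σ t / (u + c * t) ≤ σ T / (u + c * T) :=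
      (div_le_div_iff₀ (hden u hu1 t ht) (hden u hu1 T (right_mem_Icc.2 hT.le))).2 hkey
    exact mul_le_mul_of_nonneg_right h1 (by positivity)
  · -- Part 2: slope convergence
    intro δ hδpos hδ0
    rw [NormedAddCommGroup.tendsto_nhds_zero]
    intro ε hε
    have hQ : deriv σ T = s' T := (hσderiv T ⟨hT, le_rfl⟩).deriv
    have hcw : ContinuousWithinAt s' (Ioc 0 T) T := hs'cont T ⟨hT, le_rfl⟩
    obtain ⟨η₀, hη₀pos, hη₀⟩ := Metric.continuousWithinAt_iff.1 hcw (ε * σ T / 8) (by positivity)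
    set η := min η₀ (T/2) with hηdef
    have hηpos : 0 < η := lt_min hη₀pos (by linarith)
    have hηT2 : η ≤ T/2 := min_le_right _ _
    have hs'close : ∀ s ∈ Ioc (T - η) T, |s' s - s' T| < ε * σ T / 8 := by
      intro s hs
      have hs1 : s ∈ Ioc (0:ℝ) T := ⟨by linarith [hs.1], hs.2⟩
      have h2 : dist s T < η₀ := by
        rw [Real.dist_eq, abs_sub_lt_iff]
        constructor
        · linarith [hs.2, hη₀pos]
        · linarith [hs.1, min_le_left η₀ (T/2)]
      have := hη₀ hs1 h2
      rwa [Real.dist_eq] at this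
    set B := |s' T| + ε * σ T / 8 with hBdef
    have hB0 : 0 ≤ B := by positivity
    have hφ : Tendsto (fun u : ℝ => B * (c * T) / (u * σ T) + c * (u + c * T) / (u * u))
        atTop (nhds 0) := by
      have l1 : Tendsto (fun u : ℝ => B * (c * T) / (u * σ T)) atTop (nhds 0) :=
        tendsto_const_nhds.div_atTop (tendsto_id.atTop_mul_const hST)
      have l2 : Tendsto (fun u : ℝ => c * (u + c * T) / (u * u)) atTop (nhds 0) := by
        have e1 : Tendsto (fun u : ℝ => c / u + c ^ 2 * T / (u * u)) atTop (nhds 0) := by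
          have a1 : Tendsto (fun u : ℝ => c / u) atTop (nhds 0) :=
            tendsto_const_nhds.div_atTop tendsto_id
          have a2 : Tendsto (fun u : ℝ => c ^ 2 * T / (u * u)) atTop (nhds 0) :=
            tendsto_const_nhds.div_atTop (tendsto_id.atTop_mul_atTop₀ tendsto_id)
          simpa using a1.add a2
        apply e1.congr'
        filter_upwards [eventually_gt_atTop (0:ℝ)] with u hu
        field_simp
      simpa using l1.add l2
    have hδsmall : ∀ᶠ u in atTop, δ u < η := by
      filter_upwards [(Metric.tendsto_nhds.1 hδ0) η hηpos] with u hu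
      have h2 : |δ u| < η := by simpa [Real.dist_eq] using hu
      linarith [le_abs_self (δ u)]
    filter_upwards [eventually_ge_atTop (1:ℝ), hδsmall,
      hφ.eventually_lt_const (show (0:ℝ) < ε / 4 by linarith)] with u hu1 hδu hφu
    have hu0 : (0:ℝ) < u := by linarith
    have hw : (0:ℝ) < u + c * T := hden u hu1 T (right_mem_Icc.2 hT.le)
    have hbound : ∀ y ∈ ((fun t => |(1 - σ t / (u + c * t) * ((u + c * T) / σ T)) / (T - t) -
        deriv σ T / σ T|) '' Ico (T - δ u) T), y ≤ ε / 2 := by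
      rintro y ⟨t, ht, rfl⟩
      have ht1 : T - η < t := by linarith [ht.1, hδu]
      have ht2 : t < T := ht.2
      have htpos : 0 < t := by linarith [hηT2]
      obtain ⟨ξ, hξ, hslope⟩ := exists_hasDerivAt_eq_slope
        (fun s => σ s / (u + c * s) * ((u + c * T) / σ T))
        (fun s => (s' s * (u + c * s) - σ s * c) / (u + c * s) ^ 2 * ((u + c * T) / σ T))
        ht2 ((hContOn u hu1).mono (Icc_subset_Icc (by linarith) le_rfl))
        (fun x hx => hDer u hu1 x ⟨by linarith [hx.1], (hx.2).le⟩)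
      have hξI : ξ ∈ Ioc (0:ℝ) T := ⟨by linarith [hξ.1], hξ.2.le⟩
      have hv : (0:ℝ) < u + c * ξ := hden u hu1 ξ ⟨hξI.1.le, hξI.2⟩
      have huv : u ≤ u + c * ξ := by nlinarith [hξI.1.le, hc.le]
      have hval : (1 - σ t / (u + c * t) * ((u + c * T) / σ T)) / (T - t)
          = (s' ξ * (u + c * ξ) - σ ξ * c) / (u + c * ξ) ^ 2 * ((u + c * T) / σ T) := by
        rw [hAtT u hu1] at hslope
        exact hslope.symm
      show |(1 - σ t / (u + c * t) * ((u + c * T) / σ T)) / (T - t) - deriv σ T / σ T| ≤ ε / 2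
      rw [hQ, hval]
      -- estimates
      have hclose := hs'close ξ ⟨by linarith [hξ.1], hξI.2⟩
      have hs'ξpos : 0 < s' ξ := hs'pos ξ hξI
      have hPB : s' ξ ≤ B := by
        have h1 := abs_sub_abs_le_abs_sub (s' ξ) (s' T)
        have h2 : s' ξ ≤ |s' ξ| := le_abs_self _
        rw [hBdef]; linarith
      have hσξT : σ ξ ≤ σ T := hσle ξ ⟨hξI.1.le, hξI.2⟩
      have hwv : (0:ℝ) ≤ (u + c * T) - (u + c * ξ) := by nlinarith [hξI.2, hc.le]
      have hsplit : (s' ξ * (u + c * ξ) - σ ξ * c) / (u + c * ξ) ^ 2 * ((u + c * T) / σ T) - s' T / σ T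
          = (s' ξ - s' T) / σ T + s' ξ * ((u + c * T) - (u + c * ξ)) / ((u + c * ξ) * σ T)
            - σ ξ * c * (u + c * T) / ((u + c * ξ) ^ 2 * σ T) := by
        field_simp
        ring
      have ht1b : |(s' ξ - s' T) / σ T| ≤ ε / 8 := by
        rw [abs_div, abs_of_pos hST, div_le_iff₀ hST]
        nlinarith [hclose]
      have ht2b : |s' ξ * ((u + c * T) - (u + c * ξ)) / ((u + c * ξ) * σ T)| ≤ B * (c * T) / (u * σ T) := by
        rw [abs_of_nonneg (div_nonneg (mul_nonneg hs'ξpos.le hwv) (by positivity))]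
        apply div_le_div₀ (by positivity) ?_ (by positivity) ?_
        · nlinarith [mul_nonneg (mul_nonneg hB0 hc.le) hξI.1.le,
            mul_nonneg (sub_nonneg.2 hPB) hwv]
        · nlinarith [hST.le, hc.le, hξI.1.le]
      have ht3b : |σ ξ * c * (u + c * T) / ((u + c * ξ) ^ 2 * σ T)| ≤ c * (u + c * T) / (u * u) := by
        rw [abs_of_nonneg (div_nonneg (mul_nonneg (mul_nonneg (hσnonneg ξ) hc.le) hw.le)
          (by positivity))]
        rw [div_le_div_iff₀ (by positivity) (by positivity)]
        have hB1 : σ ξ * (u * u) ≤ σ T * (u + c * ξ) ^ 2 := by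
          nlinarith [mul_self_le_mul_self hu0.le huv, hσnonneg ξ, hST.le, hσξT]
        nlinarith [mul_le_mul_of_nonneg_left hB1 (mul_nonneg hc.le hw.le)]
      calc |(s' ξ * (u + c * ξ) - σ ξ * c) / (u + c * ξ) ^ 2 * ((u + c * T) / σ T) - s' T / σ T|
          = |(s' ξ - s' T) / σ T + s' ξ * ((u + c * T) - (u + c * ξ)) / ((u + c * ξ) * σ T)
              - σ ξ * c * (u + c * T) / ((u + c * ξ) ^ 2 * σ T)| := by rw [hsplit]
        _ ≤ |(s' ξ - s' T) / σ T + s' ξ * ((u + c * T) - (u + c * ξ)) / ((u + c * ξ) * σ T)|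
              + |σ ξ * c * (u + c * T) / ((u + c * ξ) ^ 2 * σ T)| := abs_sub _ _
        _ ≤ |(s' ξ - s' T) / σ T| + |s' ξ * ((u + c * T) - (u + c * ξ)) / ((u + c * ξ) * σ T)|
              + |σ ξ * c * (u + c * T) / ((u + c * ξ) ^ 2 * σ T)| := by
            linarith [abs_add_le ((s' ξ - s' T) / σ T)
              (s' ξ * ((u + c * T) - (u + c * ξ)) / ((u + c * ξ) * σ T))]
        _ ≤ ε / 2 := by linarith [ht1b, ht2b, ht3b, hφu]
    have hne : ((fun t => |(1 - σ t / (u + c * t) * ((u + c * T) / σ T)) / (T - t) -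
        deriv σ T / σ T|) '' Ico (T - δ u) T).Nonempty :=
      ⟨_, mem_image_of_mem _ (show T - δ u ∈ Ico (T - δ u) T from ⟨le_rfl, by linarith [hδpos u]⟩)⟩
    have h1 : sSup ((fun t => |(1 - σ t / (u + c * t) * ((u + c * T) / σ T)) / (T - t) -
        deriv σ T / σ T|) '' Ico (T - δ u) T) ≤ ε / 2 := Real.sSup_le hbound (by linarith)
    have h0' : 0 ≤ sSup ((fun t => |(1 - σ t / (u + c * t) * ((u + c * T) / σ T)) / (T - t) -
        deriv σ T / σ T|) '' Ico (T - δ u) T) := by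
      obtain ⟨y, hy⟩ := hne
      have hy0 : 0 ≤ y := by obtain ⟨t, ht, rfl⟩ := hy; exact abs_nonneg _
      exact le_trans hy0 (le_csSup ⟨ε / 2, fun z hz => hbound z hz⟩ hy)
    rw [Real.norm_eq_abs, abs_of_nonneg h0']
    linarith

set_option maxHeartbeats 1000000 in
/-- For `σ̃_u(t) = σ(t)(u+cT)/((u+ct)σ(T))` on `[0,T]`: for `u` large the maximum is
attained at `T`, and for any `δ_u → 0`, `δ_u > 0`,
`sup_{t∈[T−δ_u,T)} |(1−σ̃_u(t))/(T−t) − σ'(T)/σ(T)| → 0` as `u → ∞`. -/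
theorem tilde_sigma_max_and_slope
    (σ2 : ℝ → ℝ) (c T α₀ : ℝ) (hc : 0 < c) (hT : 0 < T)
    (hα₀ : 0 < α₀) (hα₀2 : α₀ ≤ 1)
    (h0 : σ2 0 = 0)
    (hcont : ContinuousOn σ2 (Set.Icc 0 T))
    (hdiff : ∀ t ∈ Set.Ioc (0:ℝ) T, HasDerivAt σ2 (deriv σ2 t) t ∧ 0 < deriv σ2 t)
    (hderivCont : ContinuousOn (deriv σ2) (Set.Ioc 0 T))
    (hRV : ∀ l : ℝ, 0 < l →
      Tendsto (fun t => σ2 (l * t) / σ2 t) (nhdsWithin 0 (Set.Ioi 0))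
        (nhds (l ^ (2 * α₀)))) :
    let σ : ℝ → ℝ := fun t => Real.sqrt (σ2 t)
    let σtilde : ℝ → ℝ → ℝ := fun u t => σ t / (u + c * t) * ((u + c * T) / σ T)
    (∀ᶠ u in atTop, IsMaxOn (σtilde u) (Set.Icc 0 T) T) ∧
      ∀ δ : ℝ → ℝ, (∀ u, 0 < δ u) → Tendsto δ atTop (nhds 0) →
        Tendsto (fun u =>
            sSup ((fun t => |(1 - σtilde u t) / (T - t) - deriv σ T / σ T|) ''
              Set.Ico (T - δ u) T))
          atTop (nhds 0) := by
  intro σ σtilde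
  exact aux_main σ2 c T hc hT h0 hcont hdiff hderivCont
end

section
/- Let Z be a standard normal random variable and Ψ(x) = P(Z > x). For constants m_k(u) = m(u)·(1 + β·(k·δ(u))²) with β > 0, if m(u)→∞ and m(u)·δ(u) → 0 with m(u)·δ(u)·N(u) → ∞, then Σ_{k=−N(u)}^{N(u)} Ψ(m_k(u)) / Ψ(m(u)) ∼ (1/(m(u)δ(u)))·√(π/β) as u → ∞. -/
open Filter MeasureTheory ProbabilityTheory

/-- Standard normal survival function. -/
noncomputable def Psi (x : ℝ) : ℝ := ((gaussianReal 0 1) (Set.Ioi x)).toReal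

/-!
Mills' ratio bounds `Ψ(x) ≤ φ(x)/x ≤ (1 + x⁻²) Ψ(x)` and `φ(M(1+a)) = φ(M) e^{-M²a} e^{-(Ma)²/2}`
give `Ψ(M(1+a)) ≤ (1 + M⁻²) e^{-M²a} Ψ(M)` for every `a ≥ 0`, and a matching lower bound whose
correction factor tends to `1` as long as `Ma → 0`. With `c = mδ` the main factor is
`e^{-m²β(kδ)²} = e^{-β(ck)²}`, and `c Σ_{|k|≤n} e^{-β(ck)²}` is a Riemann sum of the Gaussian
(even, monotone on `[0, ∞)`), so it tends to `√(π/β)` when `c → 0` and `cn → ∞`. The upper bound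
is summed over all `|k| ≤ N`; the lower bound only over `|k| ≤ K`, where `cK → ∞` but
`cK ≤ m^{1/4}`, which makes `ma = O(m^{-1/2})` on those terms.
-/

open Set Real Topology

noncomputable def phi (x : ℝ) : ℝ := (√(2 * π))⁻¹ * exp (-x ^ 2 / 2)

lemma phi_pos (x : ℝ) : 0 < phi x := by unfold phi; positivity

lemma gaussianPDFReal_zero_one : gaussianPDFReal 0 1 = phi := by
  ext x; simp [phi, gaussianPDFReal]

lemma integrable_phi : Integrable phi := gaussianPDFReal_zero_one ▸ integrable_gaussianPDFReal 0 1

lemma Psi_nonneg (x : ℝ) : 0 ≤ Psi x := ENNReal.toReal_nonneg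

lemma Psi_eq_integral (x : ℝ) : Psi x = ∫ t in Ioi x, phi t := by
  rw [Psi, gaussianReal_apply_eq_integral 0 one_ne_zero, gaussianPDFReal_zero_one,
    ENNReal.toReal_ofReal (setIntegral_nonneg measurableSet_Ioi fun t _ => (phi_pos t).le)]

lemma hasDerivAt_phi (t : ℝ) : HasDerivAt phi (-(t * phi t)) t := by
  have h : HasDerivAt (fun s : ℝ => -s ^ 2 / 2) (-t) t :=
    ((hasDerivAt_pow 2 t).neg.div_const 2).congr_deriv (by push_cast; ring)
  exact (h.exp.const_mul _).congr_deriv (by rw [phi]; ring)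

lemma tendsto_phi_atTop : Tendsto phi atTop (𝓝 0) := by
  have h : Tendsto (fun x : ℝ => -x ^ 2 / 2) atTop atBot :=
    (tendsto_neg_atTop_atBot.comp (tendsto_pow_atTop two_ne_zero)).atBot_div_const two_pos
  exact mul_zero (√(2 * π))⁻¹ ▸ (tendsto_exp_atBot.comp h).const_mul _

lemma phi_mul_one_add (M a : ℝ) :
    phi (M * (1 + a)) = phi M * exp (-M ^ 2 * a) * exp (-(M * a) ^ 2 / 2) := by
  simp only [phi, mul_assoc, ← exp_add]
  ring_nf

lemma Psi_le_phi_div {x : ℝ} (hx : 0 < x) : Psi x ≤ phi x / x := by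
  have hderiv : ∀ t ∈ Ici x, HasDerivAt (fun s => -phi s) (t * phi t) t := fun t _ =>
    (hasDerivAt_phi t).neg.congr_deriv (neg_neg _)
  have hnonneg : ∀ t ∈ Ioi x, 0 ≤ t * phi t := fun t ht =>
    mul_nonneg (hx.trans ht).le (phi_pos t).le
  have hlim : Tendsto (fun s => -phi s) atTop (𝓝 0) := by simpa using tendsto_phi_atTop.neg
  calc Psi x = ∫ t in Ioi x, phi t := Psi_eq_integral x
    _ ≤ ∫ t in Ioi x, x⁻¹ * (t * phi t) := by
      refine setIntegral_mono_on integrable_phi.integrableOn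
        ((integrableOn_Ioi_deriv_of_nonneg' hderiv hnonneg hlim).const_mul _)
        measurableSet_Ioi fun t ht => ?_
      rw [← mul_assoc, inv_mul_eq_div]
      exact le_mul_of_one_le_left (phi_pos t).le ((one_le_div hx).2 (le_of_lt ht))
    _ = phi x / x := by
      rw [integral_const_mul, integral_Ioi_of_hasDerivAt_of_nonneg' hderiv hnonneg hlim]
      ring

lemma phi_div_le_Psi {x : ℝ} (hx : 0 < x) : phi x / x ≤ (1 + (x ^ 2)⁻¹) * Psi x := by
  have hderiv : ∀ t ∈ Ici x, HasDerivAt (fun s => -(phi s / s)) (phi t + phi t / t ^ 2) t :=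
    fun t ht => by
      have ht0 : t ≠ 0 := (hx.trans_le ht).ne'
      refine ((hasDerivAt_phi t).div (hasDerivAt_id t) ht0).neg.congr_deriv ?_
      simp only [id]
      field_simp
      ring
  have hnonneg : ∀ t ∈ Ioi x, 0 ≤ phi t + phi t / t ^ 2 := fun t _ => by
    have := phi_pos t
    positivity
  have hlim : Tendsto (fun s => -(phi s / s)) atTop (𝓝 0) := by
    simpa [div_eq_mul_inv] using (tendsto_phi_atTop.mul tendsto_inv_atTop_zero).neg
  calc phi x / x = ∫ t in Ioi x, (phi t + phi t / t ^ 2) := by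
        rw [integral_Ioi_of_hasDerivAt_of_nonneg' hderiv hnonneg hlim]
        ring
    _ ≤ ∫ t in Ioi x, (1 + (x ^ 2)⁻¹) * phi t := by
      refine setIntegral_mono_on (integrableOn_Ioi_deriv_of_nonneg' hderiv hnonneg hlim)
        (integrable_phi.integrableOn.const_mul _) measurableSet_Ioi fun t ht => ?_
      have : phi t / t ^ 2 ≤ phi t / x ^ 2 :=
        div_le_div_of_nonneg_left (phi_pos t).le (by positivity)
          (pow_le_pow_left₀ hx.le (le_of_lt ht) 2)
      linarith [show (1 + (x ^ 2)⁻¹) * phi t = phi t + phi t / x ^ 2 by ring]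
    _ = (1 + (x ^ 2)⁻¹) * Psi x := by rw [integral_const_mul, Psi_eq_integral]

lemma Psi_pos {x : ℝ} (hx : 0 < x) : 0 < Psi x :=
  pos_of_mul_pos_right ((div_pos (phi_pos x) hx).trans_le (phi_div_le_Psi hx)) (by positivity)

lemma Psi_mul_one_add_le {M a : ℝ} (hM : 0 < M) (ha : 0 ≤ a) :
    Psi (M * (1 + a)) ≤ (1 + (M ^ 2)⁻¹) * exp (-M ^ 2 * a) * Psi M := by
  have hdecay : exp (-(M * a) ^ 2 / 2) / (1 + a) ≤ 1 :=
    (div_le_one (by positivity)).2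
      ((exp_le_one_iff.2 (by nlinarith [sq_nonneg (M * a)])).trans (by linarith))
  calc Psi (M * (1 + a)) ≤ phi (M * (1 + a)) / (M * (1 + a)) := Psi_le_phi_div (by positivity)
    _ = exp (-M ^ 2 * a) * (phi M / M) * (exp (-(M * a) ^ 2 / 2) / (1 + a)) := by
      rw [phi_mul_one_add]
      field_simp
    _ ≤ exp (-M ^ 2 * a) * ((1 + (M ^ 2)⁻¹) * Psi M) * 1 := by
      have := Psi_nonneg M
      gcongr
      exact phi_div_le_Psi hM
    _ = (1 + (M ^ 2)⁻¹) * exp (-M ^ 2 * a) * Psi M := by ring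

noncomputable def millsLowerFactor (M A : ℝ) : ℝ :=
  exp (-(M * A) ^ 2 / 2) / ((1 + A) * (1 + (M ^ 2)⁻¹))

lemma Psi_mul_one_add_ge {M a A : ℝ} (hM : 0 < M) (ha : 0 ≤ a) (haA : a ≤ A) :
    exp (-M ^ 2 * a) * millsLowerFactor M A * Psi M ≤ Psi (M * (1 + a)) := by
  have hy : M ≤ M * (1 + a) := le_mul_of_one_le_right hM.le (by linarith)
  calc exp (-M ^ 2 * a) * millsLowerFactor M A * Psi M
      = exp (-M ^ 2 * a) * exp (-(M * A) ^ 2 / 2) * Psi M / ((1 + A) * (1 + (M ^ 2)⁻¹)) := by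
        rw [millsLowerFactor]
        ring
    _ ≤ exp (-M ^ 2 * a) * exp (-(M * a) ^ 2 / 2) * (phi M / M)
          / ((1 + a) * (1 + ((M * (1 + a)) ^ 2)⁻¹)) := by
        have := phi_pos M
        have := Psi_nonneg M
        gcongr
        · exact Psi_le_phi_div hM
        · linarith
    _ = phi (M * (1 + a)) / (M * (1 + a)) / (1 + ((M * (1 + a)) ^ 2)⁻¹) := by
        rw [phi_mul_one_add]
        field_simp
    _ ≤ Psi (M * (1 + a)) := div_le_of_le_mul₀ (by positivity) (Psi_nonneg _)
        (mul_comm (Psi _) _ ▸ phi_div_le_Psi (hM.trans_le hy))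

lemma tendsto_one_add_inv_sq {ι : Type*} {l : Filter ι} {M : ι → ℝ} (hM : Tendsto M l atTop) :
    Tendsto (fun i => 1 + (M i ^ 2)⁻¹) l (𝓝 1) := by
  simpa using (tendsto_inv_atTop_zero.comp ((tendsto_pow_atTop two_ne_zero).comp hM)).const_add 1

lemma tendsto_millsLowerFactor {ι : Type*} {l : Filter ι} {M A : ι → ℝ}
    (hM : Tendsto M l atTop) (hMA : Tendsto (fun i => M i * A i) l (𝓝 0)) :
    Tendsto (fun i => millsLowerFactor (M i) (A i)) l (𝓝 1) := by
  have hA : Tendsto A l (𝓝 0) := by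
    refine (zero_mul (0 : ℝ) ▸ hMA.mul hM.inv_tendsto_atTop).congr' ?_
    filter_upwards [hM.eventually_gt_atTop 0] with i hi
    rw [Pi.inv_apply]
    field_simp
  have := ((hMA.pow 2).neg.div_const 2).rexp.div
    ((tendsto_const_nhds.add hA).mul (tendsto_one_add_inv_sq hM))
    (by norm_num : ((1 : ℝ) + 0) * 1 ≠ 0)
  norm_num at this
  exact this

section RiemannSum

variable {f : ℝ → ℝ}

-- The interval is written `Icc 0 (0 + n)` to match `AntitoneOn.integral_le_sum`.
lemma AntitoneOn.comp_mul_left {c : ℝ} (hf : AntitoneOn f (Ici 0)) (hc : 0 < c) (n : ℕ) :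
    AntitoneOn (fun x => f (c * x)) (Icc 0 (0 + n)) := fun _ hx _ hy hxy =>
  hf (mul_nonneg hc.le hx.1) (mul_nonneg hc.le hy.1) (mul_le_mul_of_nonneg_left hxy hc.le)

lemma AntitoneOn.integral_le_mul_sum_range {c : ℝ} (hf : AntitoneOn f (Ici 0)) (hc : 0 < c)
    (n : ℕ) : ∫ x in 0..c * n, f x ≤ c * ∑ i ∈ Finset.range n, f (c * i) := by
  have h := (hf.comp_mul_left hc n).integral_le_sum
  rw [zero_add, intervalIntegral.integral_comp_mul_left _ hc.ne', mul_zero, smul_eq_mul,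
    inv_mul_le_iff₀ hc] at h
  simpa using h

lemma AntitoneOn.mul_sum_range_le_integral {c : ℝ} (hf : AntitoneOn f (Ici 0)) (hc : 0 < c)
    (n : ℕ) : c * ∑ i ∈ Finset.range n, f (c * (i + 1)) ≤ ∫ x in 0..c * n, f x := by
  have h := (hf.comp_mul_left hc n).sum_le_integral
  rw [zero_add, intervalIntegral.integral_comp_mul_left _ hc.ne', mul_zero, smul_eq_mul,
    le_inv_mul_iff₀ hc] at h
  simpa using h

lemma Function.Even.sum_Icc_comp_mul (hf : f.Even) (c : ℝ) (n : ℕ) :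
    ∑ k ∈ Finset.Icc (-(n : ℤ)) n, f (c * k)
      = 2 * ∑ i ∈ Finset.range (n + 1), f (c * i) - f 0 := by
  have heven : (fun k : ℤ => f (c * k)).Even := fun k => by
    simpa only [Int.cast_neg, mul_neg] using hf (c * k)
  simpa [two_nsmul, two_mul] using Finset.sum_Icc_of_even_eq_range heven n

theorem tendsto_mul_sum_Icc_of_even_of_antitoneOn {ι : Type*} {l : Filter ι}
    [l.IsCountablyGenerated] (hf_even : f.Even) (hf_anti : AntitoneOn f (Ici 0))
    (hf_int : IntegrableOn f (Ioi 0)) {c : ι → ℝ} {n : ι → ℕ} (hc_pos : ∀ᶠ i in l, 0 < c i)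
    (hc : Tendsto c l (𝓝 0)) (hcn : Tendsto (fun i => c i * n i) l atTop) :
    Tendsto (fun i => c i * ∑ k ∈ Finset.Icc (-(n i : ℤ)) (n i), f (c i * k)) l
      (𝓝 (2 * ∫ x in Ioi 0, f x)) := by
  have hI {b : ι → ℝ} (hb : Tendsto b l atTop) :
      Tendsto (fun i => 2 * ∫ x in 0..b i, f x) l (𝓝 (2 * ∫ x in Ioi 0, f x)) :=
    (intervalIntegral_tendsto_integral_Ioi 0 hf_int hb).const_mul 2
  have hcn' : Tendsto (fun i => c i * (n i + 1 : ℕ)) l atTop :=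
    tendsto_atTop_mono' l (hc_pos.mono fun i hi => by push_cast; nlinarith) hcn
  have hc0 : Tendsto (fun i => c i * f 0) l (𝓝 0) := by simpa using hc.mul_const (f 0)
  refine tendsto_of_tendsto_of_tendsto_of_le_of_le' (by simpa using (hI hcn').sub hc0)
    (by simpa using (hI hcn).add hc0) ?_ ?_
  · filter_upwards [hc_pos] with i hi
    have := hf_anti.integral_le_mul_sum_range hi (n i + 1)
    push_cast at this
    rw [hf_even.sum_Icc_comp_mul]
    linarith
  · filter_upwards [hc_pos] with i hi
    have := hf_anti.mul_sum_range_le_integral hi (n i)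
    rw [hf_even.sum_Icc_comp_mul, Finset.sum_range_succ', Nat.cast_zero, mul_zero]
    push_cast
    linarith

end RiemannSum

section Gaussian

variable {b : ℝ}

lemma even_exp_neg_mul_sq (b : ℝ) : (fun x : ℝ => exp (-b * x ^ 2)).Even := fun x => by
  simp only [neg_sq]

lemma antitoneOn_exp_neg_mul_sq (hb : 0 ≤ b) :
    AntitoneOn (fun x : ℝ => exp (-b * x ^ 2)) (Ici 0) := fun x hx y _ hxy => by
  simp only [neg_mul]
  gcongr

lemma tendsto_mul_sum_Icc_exp_neg_mul_sq {ι : Type*} {l : Filter ι} [l.IsCountablyGenerated]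
    (hb : 0 < b) {c : ι → ℝ} {n : ι → ℕ} (hc_pos : ∀ᶠ i in l, 0 < c i)
    (hc : Tendsto c l (𝓝 0)) (hcn : Tendsto (fun i => c i * n i) l atTop) :
    Tendsto (fun i => c i * ∑ k ∈ Finset.Icc (-(n i : ℤ)) (n i), exp (-b * (c i * k) ^ 2)) l
      (𝓝 √(π / b)) := by
  have h := tendsto_mul_sum_Icc_of_even_of_antitoneOn (even_exp_neg_mul_sq b)
    (antitoneOn_exp_neg_mul_sq hb.le) (integrable_exp_neg_mul_sq hb).integrableOn hc_pos hc hcn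
  rwa [integral_gaussian_Ioi, mul_div_cancel₀ _ two_ne_zero] at h

end Gaussian

section Truncation

variable {ι : Type*} {l : Filter ι}

lemma exists_le_mul_le_tendsto_atTop {c g : ι → ℝ} {N : ι → ℕ}
    (hc_pos : ∀ᶠ i in l, 0 < c i) (hc : Tendsto c l (𝓝 0)) (hg : Tendsto g l atTop)
    (hcN : Tendsto (fun i => c i * N i) l atTop) :
    ∃ K : ι → ℕ, (∀ i, K i ≤ N i) ∧ (∀ᶠ i in l, c i * K i ≤ g i) ∧
      Tendsto (fun i => c i * K i) l atTop := by
  refine ⟨fun i => min (N i) ⌊g i / c i⌋₊, fun i => min_le_left _ _, ?_, ?_⟩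
  · filter_upwards [hc_pos, hg.eventually_ge_atTop 0] with i hci hgi
    calc c i * (min (N i) ⌊g i / c i⌋₊ : ℕ) ≤ c i * (g i / c i) := by
          gcongr
          exact (Nat.cast_le.2 (min_le_right _ _)).trans (Nat.floor_le (by positivity))
      _ = g i := mul_div_cancel₀ _ hci.ne'
  · refine tendsto_atTop.2 fun b => ?_
    filter_upwards [hc_pos, hcN.eventually_ge_atTop b,
      (hg.atTop_add hc.neg).eventually_ge_atTop b] with i hci hNi hgi
    rw [Nat.cast_min, mul_min_of_nonneg _ _ hci.le]
    refine le_min hNi (hgi.trans ?_)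
    have := mul_le_mul_of_nonneg_left (Nat.sub_one_lt_floor (g i / c i)).le hci.le
    rwa [mul_sub, mul_div_cancel₀ _ hci.ne', mul_one] at this

lemma tendsto_sq_div_of_le_sqrt_sqrt {x m : ι → ℝ} (hm : Tendsto m l atTop)
    (hx₀ : ∀ᶠ i in l, 0 ≤ x i) (hx : ∀ᶠ i in l, x i ≤ √(√(m i))) :
    Tendsto (fun i => x i ^ 2 / m i) l (𝓝 0) := by
  refine tendsto_of_tendsto_of_tendsto_of_le_of_le' tendsto_const_nhds
    (tendsto_inv_atTop_zero.comp (tendsto_sqrt_atTop.comp hm)) ?_ ?_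
  · filter_upwards [hx₀, hm.eventually_ge_atTop 0] with i hxi hmi using by positivity
  · filter_upwards [hx₀, hx, hm.eventually_gt_atTop 0] with i hxi hxmi hmi
    calc x i ^ 2 / m i ≤ √(√(m i)) ^ 2 / m i := by gcongr
      _ = (√(m i))⁻¹ := by rw [sq_sqrt (sqrt_nonneg _), sqrt_div_self', one_div]

lemma exists_le_tendsto_mul_atTop_tendsto_sq_div {c m : ι → ℝ} {N : ι → ℕ}
    (hc_pos : ∀ᶠ i in l, 0 < c i) (hc : Tendsto c l (𝓝 0)) (hm : Tendsto m l atTop)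
    (hcN : Tendsto (fun i => c i * N i) l atTop) :
    ∃ K : ι → ℕ, (∀ i, K i ≤ N i) ∧ Tendsto (fun i => c i * K i) l atTop ∧
      Tendsto (fun i => (c i * K i) ^ 2 / m i) l (𝓝 0) := by
  obtain ⟨K, hKN, hK_le, hK⟩ := exists_le_mul_le_tendsto_atTop hc_pos hc
    (tendsto_sqrt_atTop.comp (tendsto_sqrt_atTop.comp hm)) hcN
  exact ⟨K, hKN, hK,
    tendsto_sq_div_of_le_sqrt_sqrt hm (hc_pos.mono fun i hi => by positivity) hK_le⟩

end Truncation

section SumPsi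

variable {β M δ : ℝ}

lemma sum_Psi_div_le (hβ : 0 ≤ β) (hM : 0 < M) (n : ℕ) :
    (∑ k ∈ Finset.Icc (-(n : ℤ)) n, Psi (M * (1 + β * ((k : ℝ) * δ) ^ 2))) / Psi M
      ≤ (1 + (M ^ 2)⁻¹) * ∑ k ∈ Finset.Icc (-(n : ℤ)) n, exp (-β * (M * δ * k) ^ 2) := by
  rw [div_le_iff₀ (Psi_pos hM), Finset.mul_sum, Finset.sum_mul]
  gcongr with k
  calc Psi (M * (1 + β * ((k : ℝ) * δ) ^ 2))
      ≤ (1 + (M ^ 2)⁻¹) * exp (-M ^ 2 * (β * ((k : ℝ) * δ) ^ 2)) * Psi M :=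
        Psi_mul_one_add_le hM (by positivity)
    _ = (1 + (M ^ 2)⁻¹) * exp (-β * (M * δ * k) ^ 2) * Psi M := by ring_nf

lemma sum_Psi_div_ge (hβ : 0 ≤ β) (hM : 0 < M) {K n : ℕ} (hKn : K ≤ n) :
    millsLowerFactor M (β * (K * δ) ^ 2)
        * ∑ k ∈ Finset.Icc (-(K : ℤ)) K, exp (-β * (M * δ * k) ^ 2)
      ≤ (∑ k ∈ Finset.Icc (-(n : ℤ)) n, Psi (M * (1 + β * ((k : ℝ) * δ) ^ 2))) / Psi M := by
  rw [le_div_iff₀ (Psi_pos hM), Finset.mul_sum, Finset.sum_mul]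
  calc _ ≤ ∑ k ∈ Finset.Icc (-(K : ℤ)) K, Psi (M * (1 + β * ((k : ℝ) * δ) ^ 2)) := by
        gcongr with k hk
        have hkK : ((k : ℝ) * δ) ^ 2 ≤ (K * δ) ^ 2 := by
          rw [mul_pow, mul_pow]
          refine mul_le_mul_of_nonneg_right ?_ (sq_nonneg δ)
          exact_mod_cast sq_le_sq' (Finset.mem_Icc.1 hk).1 (Finset.mem_Icc.1 hk).2
        calc _ = exp (-M ^ 2 * (β * ((k : ℝ) * δ) ^ 2))
              * millsLowerFactor M (β * (K * δ) ^ 2) * Psi M := by ring_nf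
          _ ≤ _ := Psi_mul_one_add_ge hM (by positivity) (by gcongr)
    _ ≤ _ := Finset.sum_le_sum_of_subset_of_nonneg
        (Finset.Icc_subset_Icc (by simpa using hKn) (by simpa using hKn))
        fun _ _ _ => Psi_nonneg _

end SumPsi

/-- Riemann-sum asymptotics for sums of normal tails: with `m_k(u) = m(u)(1+β(kδ(u))²)`,
if `m(u)→∞`, `m(u)δ(u)→0` and `m(u)δ(u)N(u)→∞`, then
`Σ_{k=−N(u)}^{N(u)} Ψ(m_k(u)) / Ψ(m(u)) ∼ (m(u)δ(u))⁻¹ √(π/β)`. -/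
theorem sum_normal_tails_asymptotics
    (β : ℝ) (hβ : 0 < β) (m δ : ℕ → ℝ) (N : ℕ → ℕ)
    (hδ : ∀ u, 0 < δ u)
    (hm : Tendsto m atTop atTop)
    (hmδ : Tendsto (fun u => m u * δ u) atTop (nhds 0))
    (hmδN : Tendsto (fun u => m u * δ u * (N u : ℝ)) atTop atTop) :
    Tendsto (fun u =>
        (∑ k ∈ Finset.Icc (-(N u : ℤ)) (N u : ℤ),
            Psi (m u * (1 + β * ((k : ℝ) * δ u) ^ 2))) / Psi (m u)
          / ((m u * δ u)⁻¹ * Real.sqrt (Real.pi / β)))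
      atTop (nhds 1) := by
  have hm_pos : ∀ᶠ u in atTop, 0 < m u := hm.eventually_gt_atTop 0
  have hc_pos : ∀ᶠ u in atTop, 0 < m u * δ u := hm_pos.mono fun u hu => mul_pos hu (hδ u)
  obtain ⟨K, hKN, hK, hK_sq⟩ := exists_le_tendsto_mul_atTop_tendsto_sq_div hc_pos hmδ hm hmδN
  have hε : Tendsto (fun u => millsLowerFactor (m u) (β * (K u * δ u) ^ 2)) atTop (𝓝 1) := by
    refine tendsto_millsLowerFactor hm ((mul_zero β ▸ hK_sq.const_mul β).congr' ?_)
    filter_upwards [hm_pos] with u hu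
    field_simp
  have hcR : Tendsto (fun u => m u * δ u * ((∑ k ∈ Finset.Icc (-(N u : ℤ)) (N u : ℤ),
      Psi (m u * (1 + β * ((k : ℝ) * δ u) ^ 2))) / Psi (m u))) atTop (𝓝 √(π / β)) := by
    refine tendsto_of_tendsto_of_tendsto_of_le_of_le'
      (by simpa only [one_mul] using hε.mul (tendsto_mul_sum_Icc_exp_neg_mul_sq hβ hc_pos hmδ hK))
      (by simpa only [one_mul] using (tendsto_one_add_inv_sq hm).mul
            (tendsto_mul_sum_Icc_exp_neg_mul_sq hβ hc_pos hmδ hmδN)) ?_ ?_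
    · filter_upwards [hc_pos, hm_pos] with u hc hmu
      rw [mul_left_comm]
      exact mul_le_mul_of_nonneg_left (sum_Psi_div_ge hβ.le hmu (hKN u)) hc.le
    · filter_upwards [hc_pos, hm_pos] with u hc hmu
      rw [mul_left_comm]
      exact mul_le_mul_of_nonneg_left (sum_Psi_div_le hβ.le hmu (N u)) hc.le
  refine (div_self (by positivity : √(π / β) ≠ 0) ▸ hcR.div_const √(π / β)).congr fun u => ?_
  rw [div_mul_eq_div_div, div_inv_eq_mul]
  ring
end

section
/- Suppose σ² is regularly varying at 0 with index 2α₀ ∈ (0,2] and continuous and increasing near 0, with asymptotic inverse σ⃖. If Δ₁(u) = σ⃖(√2·σ²(T)/(u+cT)) and Δ₂(u) = (σ(T)/(u+cT))², then: if σ²(t) = o(t) as t → 0, Δ₂(u)/Δ₁(u) → 0 as u → ∞. -/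
open Filter Set Topology

/-- With `Δ₁(u) = σ⃖(√2 σ²(T)/(u+cT))` and `Δ₂(u) = (σ(T)/(u+cT))²`, where `σ⃖` is the
asymptotic inverse of `σ = √σ²` at 0 and `σ²` is regularly varying at 0 with index
`2α₀ ∈ (0,2]`: if `σ²(t) = o(t)` as `t → 0`, then `Δ₂(u)/Δ₁(u) → 0` as `u → ∞`. -/
theorem delta2_little_o_delta1
    (σ2 : ℝ → ℝ) (c T α₀ : ℝ) (hc : 0 < c) (hT : 0 < T)
    (hα₀ : 0 < α₀) (hα₀2 : α₀ ≤ 1)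
    (hpos : ∀ t : ℝ, 0 < t → 0 < σ2 t)
    (hmono : ∃ ε > 0, MonotoneOn σ2 (Set.Icc 0 ε))
    (hcont : ∃ ε > 0, ContinuousOn σ2 (Set.Icc 0 ε))
    (hRV : ∀ l : ℝ, 0 < l →
      Tendsto (fun t => σ2 (l * t) / σ2 t) (nhdsWithin 0 (Set.Ioi 0))
        (nhds (l ^ (2 * α₀))))
    (inv : ℝ → ℝ) (hinvpos : ∀ t : ℝ, 0 < t → 0 < inv t)
    (hinv : Tendsto (fun t => Real.sqrt (σ2 (inv t)) / t) (nhdsWithin 0 (Set.Ioi 0))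
      (nhds 1))
    (hlito : Tendsto (fun t => σ2 t / t) (nhdsWithin 0 (Set.Ioi 0)) (nhds 0)) :
    Tendsto (fun u =>
        ((Real.sqrt (σ2 T) / (u + c * T)) ^ 2)
          / inv (Real.sqrt 2 * σ2 T / (u + c * T)))
      atTop (nhds 0) := by
  have hSpos : 0 < σ2 T := hpos T hT
  -- the map s(u) = √2 σ²(T)/(u+cT) tends to 0 within (0,∞)
  have hden : Tendsto (fun u : ℝ => u + c * T) atTop atTop :=
    tendsto_atTop_add_const_right _ _ tendsto_id
  have hs0 : Tendsto (fun u : ℝ => Real.sqrt 2 * σ2 T / (u + c * T)) atTop (𝓝 0) :=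
    Tendsto.div_atTop tendsto_const_nhds hden
  have hspos : ∀ᶠ u in atTop, 0 < Real.sqrt 2 * σ2 T / (u + c * T) := by
    filter_upwards [hden.eventually_gt_atTop 0] with u hu
    positivity
  have hs : Tendsto (fun u : ℝ => Real.sqrt 2 * σ2 T / (u + c * T)) atTop (𝓝[>] 0) := by
    rw [tendsto_nhdsWithin_iff]
    exact ⟨hs0, hspos⟩
  -- σ²(inv t)/t² → 1
  have h2 : Tendsto (fun t => σ2 (inv t) / t ^ 2) (𝓝[>] (0:ℝ)) (𝓝 1) := by
    have := hinv.mul hinv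
    rw [mul_one] at this
    refine this.congr' ?_
    filter_upwards [self_mem_nhdsWithin] with t ht
    have h1 : 0 < inv t := hinvpos t ht
    rw [div_mul_div_comm, Real.mul_self_sqrt (hpos _ h1).le, sq]
  -- key: t²/inv(t) → 0 within (0,∞)
  have key : Tendsto (fun t => t ^ 2 / inv t) (𝓝[>] (0:ℝ)) (𝓝 0) := by
    rw [Metric.tendsto_nhds]
    intro ε hε
    -- from hlito get δ such that σ2 x / x < ε/4 on (0, δ)
    have hl := (Metric.tendsto_nhds.mp hlito) (ε / 4) (by positivity)
    obtain ⟨δ, hδ0, hδ⟩ := (nhdsGT_basis (0:ℝ)).eventually_iff.mp hl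
    have hev1 : ∀ᶠ t in 𝓝[>] (0:ℝ), 1 / 2 < σ2 (inv t) / t ^ 2 :=
      h2.eventually (eventually_gt_nhds (by norm_num))
    have hev2 : ∀ᶠ t in 𝓝[>] (0:ℝ), t ∈ Ioo 0 (Real.sqrt (ε * δ)) := by
      refine Ioo_mem_nhdsGT_of_mem ⟨le_refl _, Real.sqrt_pos.mpr (by positivity)⟩
    filter_upwards [hev1, hev2, self_mem_nhdsWithin] with t h1 hioo ht
    have htpos : (0:ℝ) < t := ht
    have hinvt : 0 < inv t := hinvpos t htpos
    have ht2 : t ^ 2 < 2 * σ2 (inv t) := by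
      have : 1 / 2 * t ^ 2 < σ2 (inv t) / t ^ 2 * t ^ 2 := by
        exact mul_lt_mul_of_pos_right h1 (by positivity)
      rw [div_mul_cancel₀ _ (by positivity : (t:ℝ) ^ 2 ≠ 0)] at this
      linarith
    have hnonneg : 0 ≤ t ^ 2 / inv t := by positivity
    rw [Real.dist_eq, sub_zero, abs_of_nonneg hnonneg]
    by_cases hcase : inv t < δ
    · -- σ2 (inv t) / inv t < ε/4
      have hmem : inv t ∈ Ioo 0 δ := ⟨hinvt, hcase⟩
      have := hδ hmem
      rw [Real.dist_eq, sub_zero] at this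
      have hb : σ2 (inv t) / inv t < ε / 4 := (abs_lt.mp this).2
      calc t ^ 2 / inv t < 2 * σ2 (inv t) / inv t :=
            (div_lt_div_iff_of_pos_right hinvt).mpr ht2
        _ = 2 * (σ2 (inv t) / inv t) := by rw [mul_div_assoc]
        _ < 2 * (ε / 4) := by linarith
        _ < ε := by linarith
    · push_neg at hcase
      have ht2' : t ^ 2 < ε * δ := by
        have := hioo.2
        calc t ^ 2 = t * t := sq t
          _ < Real.sqrt (ε * δ) * Real.sqrt (ε * δ) :=
            mul_lt_mul'' hioo.2 hioo.2 htpos.le htpos.le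
          _ = ε * δ := Real.mul_self_sqrt (by positivity)
      calc t ^ 2 / inv t ≤ t ^ 2 / δ :=
            div_le_div_of_nonneg_left (by positivity) hδ0 hcase
        _ < ε := (div_lt_iff₀ hδ0).mpr (by linarith [ht2'])
  -- compose and rewrite
  have comp := key.comp hs
  have comp2 := comp.const_mul (1 / (2 * σ2 T))
  rw [mul_zero] at comp2
  refine comp2.congr' ?_
  filter_upwards [hden.eventually_gt_atTop 0] with u hu
  have hX := inv (Real.sqrt 2 * σ2 T / (u + c * T))
  simp only [Function.comp]
  have hsq2 : (Real.sqrt 2 * σ2 T / (u + c * T)) ^ 2 = 2 * (σ2 T) ^ 2 / (u + c * T) ^ 2 := by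
    rw [div_pow, mul_pow, Real.sq_sqrt (by norm_num : (2:ℝ) ≥ 0)]
  have hsqS : (Real.sqrt (σ2 T) / (u + c * T)) ^ 2 = σ2 T / (u + c * T) ^ 2 := by
    rw [div_pow, Real.sq_sqrt hSpos.le]
  rw [hsq2, hsqS, ← mul_div_assoc, ← mul_div_assoc]
  congr 1
  field_simp
end
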